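/- For any acyclic reorientation R of tc(D), with asour_R the induced sourcing of P(D) (sending each path to its source in R), we have orn_R = orn_{asour_R}. -/

import Mathlib

/-- A directed path from `u` to `v` in the digraph `D` using only vertices of `U`. -/
def pathIn {V : Type*} (D : V → V → Prop) (U : Set V) (u v : V) : Prop :=
  Relation.ReflTransGen (fun a b => D a b ∧ a ∈ U ∧ b ∈ U) u v

/-- An ornament of `D` at `v`. -/
def IsOrnament {V : Type*} (D : V → V → Prop) (v : V) (U : Set V) : Prop :=
  v ∈ U ∧ ∀ u ∈ U, pathIn D U u v

/-- The inclusion maximal ornament of `D` at `v` contained in `X`. -/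
def maxOrnIn {V : Type*} (D : V → V → Prop) (v : V) (X : Set V) : Set V :=
  ⋃₀ {U | IsOrnament D v U ∧ U ⊆ X}

/-- The ornamentation associated to a reversed edge set `rev`. -/
def ornOfRev {V : Type*} (D rev : V → V → Prop) (v : V) : Set V :=
  maxOrnIn D v {u | Relation.ReflTransGen rev u v}

/-- `IsPathSet D P u v` : `P` is the vertex set of a directed path in `D` from `u` to `v`. -/
inductive IsPathSet {V : Type*} (D : V → V → Prop) : Set V → V → V → Prop
  | single (v : V) : IsPathSet D {v} v v
  | cons {u w v : V} {P : Set V} :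
      D u w → IsPathSet D P w v → u ∉ P → IsPathSet D (insert u P) u v

/-- The path hypergraph of `D`. -/
def PathHyp {V : Type*} (D : V → V → Prop) : Set (Set V) :=
  {P | ∃ u v, IsPathSet D P u v}

/-- `rev(S)`: pairs `(u,v)` such that some directed path `P` from `u` to `v` has `S P = v`. -/
def revOfSourcing {V : Type*} (D : V → V → Prop) (S : Set V → V) : V → V → Prop :=
  fun u v => ∃ P, IsPathSet D P u v ∧ S P = v

/-- The reorientation of `tcD` with reversed edge set `rev`. -/
def reorient {V : Type*} (tcD rev : V → V → Prop) : V → V → Prop :=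
  fun u v => (tcD u v ∧ ¬ rev u v) ∨ (tcD v u ∧ rev v u)

/-- A relation is acyclic if it has no directed cycle. -/
def AcyclicRel {V : Type*} (R : V → V → Prop) : Prop :=
  ∀ v, ¬ Relation.TransGen R v v

/-! Every edge `(u, v)`, `u ≠ v`, of `rev(asour_R)` lies in `rev`: `u` is not the source of the path,
so `R` orients `v → u` against the order. This gives `orn_{asour_R} ⊆ orn_R`.
Conversely, take a path `P` from `u` to `v` inside the ornament `orn_R v`. Its source `S P` reaches
`v` along reversed edges, so if `S P ≠ v` then `v` reaches `S P` in `R`; together with the edge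
`S P → v` of `R` this is a cycle. Hence `S P = v`, i.e. `(u, v) ∈ rev(asour_R)`, and `orn_R v` is an
ornament inside the reach of `rev(asour_R)`. -/

open Relation

section Ornament

variable {V : Type*} {D : V → V → Prop} {v : V} {X Y U : Set V}

lemma pathIn.mono {u : V} (hUY : U ⊆ Y) (h : pathIn D U u v) : pathIn D Y u v :=
  ReflTransGen.mono (fun _ _ ⟨hab, ha, hb⟩ => ⟨hab, hUY ha, hUY hb⟩) _ _ h

lemma maxOrnIn_subset : maxOrnIn D v X ⊆ X :=
  Set.sUnion_subset fun _ hU => hU.2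

lemma maxOrnIn_mono (hXY : X ⊆ Y) : maxOrnIn D v X ⊆ maxOrnIn D v Y :=
  Set.sUnion_mono fun _ ⟨hU, hUX⟩ => ⟨hU, hUX.trans hXY⟩

lemma IsOrnament.subset_maxOrnIn (hU : IsOrnament D v U) (hUX : U ⊆ X) :
    U ⊆ maxOrnIn D v X :=
  Set.subset_sUnion_of_mem ⟨hU, hUX⟩

lemma isOrnament_singleton : IsOrnament D v {v} :=
  ⟨rfl, fun _ hu => hu ▸ ReflTransGen.refl⟩

lemma isOrnament_maxOrnIn (hv : v ∈ X) : IsOrnament D v (maxOrnIn D v X) := by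
  refine ⟨isOrnament_singleton.subset_maxOrnIn (Set.singleton_subset_iff.2 hv) rfl, ?_⟩
  rintro u ⟨U, ⟨hU, hUX⟩, huU⟩
  exact (hU.2 u huU).mono (hU.subset_maxOrnIn hUX)

lemma ornOfRev_mono {rev rev' : V → V → Prop} (h : ∀ a b, rev a b → ReflTransGen rev' a b) :
    ornOfRev D rev v ⊆ ornOfRev D rev' v :=
  maxOrnIn_mono fun _ hu => hu.lift' id h

lemma ornOfRev_subset {rev : V → V → Prop} : ornOfRev D rev v ⊆ {u | ReflTransGen rev u v} :=
  maxOrnIn_subset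

lemma isOrnament_ornOfRev {rev : V → V → Prop} : IsOrnament D v (ornOfRev D rev v) :=
  isOrnament_maxOrnIn ReflTransGen.refl

end Ornament

section PathSet

variable {V : Type*} {D : V → V → Prop} {P : Set V} {u v : V}

lemma IsPathSet.left_mem (h : IsPathSet D P u v) : u ∈ P := by
  cases h with
  | single => rfl
  | cons => exact Set.mem_insert _ _

lemma IsPathSet.right_mem (h : IsPathSet D P u v) : v ∈ P := by
  induction h with
  | single => rfl
  | cons _ _ _ ih => exact Set.mem_insert_of_mem _ ih

variable [Preorder V] (hD : ∀ a b, D a b → a < b)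
include hD

lemma IsPathSet.left_le (h : IsPathSet D P u v) : ∀ x ∈ P, u ≤ x := by
  induction h with
  | single => rintro x rfl; rfl
  | cons hd _ _ ih =>
    rintro x (rfl | hx)
    · rfl
    · exact (hD _ _ hd).le.trans (ih x hx)

lemma pathIn.exists_isPathSet {U : Set V} (h : pathIn D U u v) (hu : u ∈ U) :
    ∃ P, IsPathSet D P u v ∧ P ⊆ U := by
  induction h using ReflTransGen.head_induction_on with
  | refl => exact ⟨{v}, .single v, Set.singleton_subset_iff.2 hu⟩
  | @head a b hab _ ih =>
    obtain ⟨hDab, -, hb⟩ := hab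
    obtain ⟨P, hP, hPU⟩ := ih hb
    have ha : a ∉ P := fun haP => (hP.left_le hD a haP).not_gt (hD _ _ hDab)
    exact ⟨insert a P, hP.cons hDab ha, Set.insert_subset hu hPU⟩

lemma transGen_lt {a b : V} (h : TransGen D a b) : a < b := by
  induction h with
  | single h => exact hD _ _ h
  | tail _ h ih => exact ih.trans (hD _ _ h)

end PathSet

section Reorientation

variable {V : Type*} {tcD rev : V → V → Prop}

lemma transGen_reorient_of_transGen_rev (hsub : ∀ a b, rev a b → tcD a b) {a b : V}
    (h : TransGen rev a b) : TransGen (reorient tcD rev) b a :=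
  transGen_swap.1 (TransGen.mono (fun x y hxy => Or.inr ⟨hsub x y hxy, hxy⟩) _ _ h)

lemma reflGen_of_revOfSourcing [PartialOrder V] {D : V → V → Prop} (hD : ∀ a b, D a b → a < b)
    {S : Set V → V}
    (hS : ∀ P ∈ PathHyp D, S P ∈ P ∧ ∀ w ∈ P, w ≠ S P → reorient (TransGen D) rev (S P) w)
    {a b : V} (h : revOfSourcing D S a b) : ReflGen rev a b := by
  obtain ⟨P, hP, rfl⟩ := h
  rcases (hP.left_le hD _ hP.right_mem).eq_or_lt with rfl | hlt
  · exact .refl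
  rcases (hS P ⟨a, _, hP⟩).2 a hP.left_mem hlt.ne with ⟨hba, -⟩ | ⟨-, hab⟩
  · exact absurd (transGen_lt hD hba) hlt.not_gt
  · exact .single hab

lemma eq_of_reflTransGen_rev_of_reorient (hsub : ∀ a b, rev a b → tcD a b)
    (hacyc : AcyclicRel (reorient tcD rev)) {a b : V} (h : ReflTransGen rev a b)
    (hR : a ≠ b → reorient tcD rev a b) : a = b := by
  by_contra hab
  rcases reflTransGen_iff_eq_or_transGen.1 h with h | h
  · exact hab h.symm
  · exact hacyc b ((transGen_reorient_of_transGen_rev hsub h).tail (hR hab))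

end Reorientation

/-- For any acyclic reorientation `R` of `tc(D)`, with `asour_R` the induced sourcing of
`P(D)` (sending each path to its source in `R`), we have `orn_R = orn_{asour_R}`. -/
theorem ornOfRev_eq_ornOfAsour {n : ℕ} (D : Fin n → Fin n → Prop)
    (hD : ∀ u v, D u v → u < v) (rev : Fin n → Fin n → Prop)
    (hsub : ∀ u v, rev u v → Relation.TransGen D u v)
    (hacyc : AcyclicRel (reorient (Relation.TransGen D) rev))
    (S : Set (Fin n) → Fin n)
    (hS : ∀ P ∈ PathHyp D, S P ∈ P ∧
      ∀ w ∈ P, w ≠ S P → reorient (Relation.TransGen D) rev (S P) w) :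
    ornOfRev D rev = ornOfRev D (revOfSourcing D S) := by
  funext v
  refine Set.Subset.antisymm ?_
    (ornOfRev_mono fun a b h => (reflGen_of_revOfSourcing hD hS h).to_reflTransGen)
  refine isOrnament_ornOfRev.subset_maxOrnIn fun u hu => .single ?_
  obtain ⟨P, hP, hPW⟩ := (isOrnament_ornOfRev.2 u hu).exists_isPathSet hD hu
  obtain ⟨hSP, hsrc⟩ := hS P ⟨u, v, hP⟩
  exact ⟨P, hP, eq_of_reflTransGen_rev_of_reorient hsub hacyc (ornOfRev_subset (hPW hSP))
    fun hne => hsrc v hP.right_mem (Ne.symm hne)⟩
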